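/- Let X = {a_1,…,a_ℓ} be a finite set of ℓ distinct points and N ≥ 2. For any λ ∈ P_{1/N}(X), γ_λ is the unique element of P_sym(X^N) whose two-point marginal equals (N/(N−1)) λ ⊗ λ − (1/(N−1)) Σ_{i=1}^ℓ λ({a_i}) δ_{a_i} ⊗ δ_{a_i}: if γ ∈ P_sym(X^N) satisfies M_2γ = M_2γ_λ, then γ = γ_λ. -/

import Mathlib

/-!
Write `c_j(x) = #{k | x k = j}`. For a symmetric `γ`, the expectation of any sum
`∑_{k,k'} φ(x_k, x_{k'})` over pairs of coordinates is a linear function of `M₂γ`, since each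
pair `(k, k')` can be moved to `(0, 1)` (or `(0, 0)`) by a permutation. The variance-type
quantity `∑_j (c_j(x) - N λ_j)²` is such a pair sum, and it vanishes `γ_λ`-almost surely; hence
it vanishes `γ`-almost surely, i.e. `γ` lives on `{x | c(x) = N λ}`. That set is a single orbit of
the permutation group, so a symmetric probability measure on it is uniform, and equals `γ_λ`.
-/

open Finset

noncomputable def symmetrize (N ℓ : ℕ) (γ : (Fin N → Fin ℓ) → ℝ) : (Fin N → Fin ℓ) → ℝ :=
  fun x => (1 / (Nat.factorial N : ℝ)) * ∑ σ : Equiv.Perm (Fin N), γ (x ∘ σ)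

def IsProbVec {α : Type*} [Fintype α] (p : α → ℝ) : Prop :=
  (∀ x, 0 ≤ p x) ∧ ∑ x, p x = 1

def IsSymmFun (N ℓ : ℕ) (γ : (Fin N → Fin ℓ) → ℝ) : Prop :=
  ∀ (σ : Equiv.Perm (Fin N)) (x : Fin N → Fin ℓ), γ (x ∘ σ) = γ x

def PSym (N ℓ : ℕ) : Set ((Fin N → Fin ℓ) → ℝ) :=
  {γ | IsProbVec γ ∧ IsSymmFun N ℓ γ}

noncomputable def margOf (N ℓ : ℕ) (x : Fin N → Fin ℓ) : Fin ℓ → ℝ :=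
  fun j => ((Finset.univ.filter fun k => x k = j).card : ℝ) / (N : ℝ)

noncomputable def QuantFinset (N ℓ : ℕ) : Finset (Fin ℓ → ℝ) :=
  Finset.image (margOf N ℓ) Finset.univ

noncomputable def gammaLam (N ℓ : ℕ) (lam : Fin ℓ → ℝ) : (Fin N → Fin ℓ) → ℝ :=
  if h : ∃ i : Fin N → Fin ℓ, margOf N ℓ i = lam then
    symmetrize N ℓ (fun x => if x = h.choose then 1 else 0)
  else 0

noncomputable def marg1 (N ℓ : ℕ) [NeZero N] (γ : (Fin N → Fin ℓ) → ℝ) : Fin ℓ → ℝ :=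
  fun j => ∑ x : Fin N → Fin ℓ, if x 0 = j then γ x else 0

noncomputable def marg2 (N ℓ : ℕ) [NeZero N] (γ : (Fin N → Fin ℓ) → ℝ) : Fin ℓ → Fin ℓ → ℝ :=
  fun j k => ∑ x : Fin N → Fin ℓ, if x 0 = j ∧ x 1 = k then γ x else 0

noncomputable def cCoef (N ℓ : ℕ) (c : (Fin N → Fin ℓ) → ℝ) (lam : Fin ℓ → ℝ) : ℝ :=
  ∑ x : Fin N → Fin ℓ, gammaLam N ℓ lam x * c x

theorem Fintype.sum_comp_perm {α β M : Type*} [Fintype α] [DecidableEq α] [Fintype β]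
    [AddCommMonoid M] (σ : Equiv.Perm α) (F : (α → β) → M) :
    ∑ x, F (x ∘ σ) = ∑ x, F x :=
  Fintype.sum_equiv (σ.symm.arrowCongr (Equiv.refl β)) _ _ fun _ => rfl

section
variable {N ℓ : ℕ}

theorem exists_perm_apply_zero_apply_one [NeZero N] (hN : 2 ≤ N) {k k' : Fin N} (h : k ≠ k') :
    ∃ σ : Equiv.Perm (Fin N), σ 0 = k ∧ σ 1 = k' := by
  have h01 : (0 : Fin N) ≠ 1 := by
    simp [Fin.ext_iff, Nat.mod_eq_of_lt (show 1 < N by omega)]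
  exact MulAction.is_two_pretransitive_iff.mp (Equiv.Perm.isMultiplyPretransitive (Fin N) 2) h01 h

theorem margOf_comp_perm (σ : Equiv.Perm (Fin N)) (x : Fin N → Fin ℓ) :
    margOf N ℓ (x ∘ σ) = margOf N ℓ x := by
  funext j
  simp only [margOf]
  congr 2
  exact Finset.card_equiv σ (by simp)

theorem exists_perm_comp_eq_of_margOf_eq [NeZero N] {x y : Fin N → Fin ℓ}
    (h : margOf N ℓ x = margOf N ℓ y) : ∃ σ : Equiv.Perm (Fin N), x ∘ σ = y := by
  have hcard : ∀ j, Fintype.card {k // y k = j} = Fintype.card {k // x k = j} := fun j => by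
    have := congrFun h j
    simp only [margOf, div_left_inj' (NeZero.ne (N : ℝ)), Nat.cast_inj] at this
    simpa only [Fintype.card_subtype] using this.symm
  let e j : {k // y k = j} ≃ {k // x k = j} := Fintype.equivOfCardEq (hcard j)
  exact ⟨(Equiv.sigmaFiberEquiv y).symm.trans
    ((Equiv.sigmaCongrRight e).trans (Equiv.sigmaFiberEquiv x)),
    funext fun k => (e (y k) ⟨k, rfl⟩).2⟩

theorem IsSymmFun.apply_eq_of_margOf_eq [NeZero N] {γ : (Fin N → Fin ℓ) → ℝ}
    (hγ : IsSymmFun N ℓ γ) {x y : Fin N → Fin ℓ} (h : margOf N ℓ x = margOf N ℓ y) :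
    γ x = γ y := by
  obtain ⟨σ, rfl⟩ := exists_perm_comp_eq_of_margOf_eq h
  exact (hγ σ x).symm

theorem IsSymmFun.sum_mul_comp_perm {γ : (Fin N → Fin ℓ) → ℝ} (hγ : IsSymmFun N ℓ γ)
    (σ : Equiv.Perm (Fin N)) (F : (Fin N → Fin ℓ) → ℝ) :
    ∑ x, γ x * F (x ∘ σ) = ∑ x, γ x * F x := by
  calc ∑ x, γ x * F (x ∘ σ) = ∑ x, γ (x ∘ σ) * F (x ∘ σ) := by simp only [hγ σ]
    _ = ∑ x, γ x * F x := Fintype.sum_comp_perm σ fun x => γ x * F x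

theorem isSymmFun_symmetrize (F : (Fin N → Fin ℓ) → ℝ) : IsSymmFun N ℓ (symmetrize N ℓ F) := by
  intro τ x
  simp only [symmetrize]
  congr 1
  exact Fintype.sum_equiv (Equiv.mulLeft τ) _ _ fun σ => rfl

theorem sum_symmetrize (F : (Fin N → Fin ℓ) → ℝ) :
    ∑ x, symmetrize N ℓ F x = ∑ x, F x := by
  simp only [symmetrize, ← Finset.mul_sum]
  rw [Finset.sum_comm]
  simp only [Fintype.sum_comp_perm, Finset.sum_const, Finset.card_univ, Fintype.card_perm,
    Fintype.card_fin, nsmul_eq_mul]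
  field_simp

theorem exists_perm_of_symmetrize_ne_zero {F : (Fin N → Fin ℓ) → ℝ} {x : Fin N → Fin ℓ}
    (h : symmetrize N ℓ F x ≠ 0) : ∃ σ : Equiv.Perm (Fin N), F (x ∘ σ) ≠ 0 := by
  by_contra! hF
  simp [symmetrize, hF] at h

theorem sum_mul_apply_zero_apply_one [NeZero N] (γ : (Fin N → Fin ℓ) → ℝ)
    (φ : Fin ℓ → Fin ℓ → ℝ) :
    ∑ x, γ x * φ (x 0) (x 1) = ∑ a, ∑ b, marg2 N ℓ γ a b * φ a b := by
  have hx : ∀ x : Fin N → Fin ℓ,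
      ∑ a, ∑ b, (if x 0 = a ∧ x 1 = b then γ x * φ a b else 0) = γ x * φ (x 0) (x 1) := by
    simp [ite_and]
  simp only [marg2, Finset.sum_mul, ite_mul, zero_mul, ← hx]
  rw [Finset.sum_comm]
  exact Finset.sum_congr rfl fun _ _ => Finset.sum_comm

theorem IsSymmFun.sum_mul_apply_apply [NeZero N] (hN : 2 ≤ N) {γ : (Fin N → Fin ℓ) → ℝ}
    (hγ : IsSymmFun N ℓ γ) (k k' : Fin N) (φ : Fin ℓ → Fin ℓ → ℝ) :
    ∑ x, γ x * φ (x k) (x k') =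
      ∑ a, ∑ b, marg2 N ℓ γ a b * if k = k' then φ a a else φ a b := by
  split_ifs with hk
  · subst hk
    calc ∑ x, γ x * φ (x k) (x k)
        = ∑ x, γ x * φ ((x ∘ Equiv.swap 0 k) 0) ((x ∘ Equiv.swap 0 k) 0) := by simp
      _ = ∑ x, γ x * φ (x 0) (x 0) := hγ.sum_mul_comp_perm _ fun x => φ (x 0) (x 0)
      _ = _ := sum_mul_apply_zero_apply_one γ fun a _ => φ a a
  · obtain ⟨σ, hσ0, hσ1⟩ := exists_perm_apply_zero_apply_one hN hk
    calc ∑ x, γ x * φ (x k) (x k') = ∑ x, γ x * φ ((x ∘ σ) 0) ((x ∘ σ) 1) := by simp [hσ0, hσ1]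
      _ = ∑ x, γ x * φ (x 0) (x 1) := hγ.sum_mul_comp_perm σ fun x => φ (x 0) (x 1)
      _ = _ := sum_mul_apply_zero_apply_one γ φ

theorem IsSymmFun.sum_mul_sum_sum_eq_of_marg2_eq [NeZero N] (hN : 2 ≤ N)
    {γ γ' : (Fin N → Fin ℓ) → ℝ} (hγ : IsSymmFun N ℓ γ) (hγ' : IsSymmFun N ℓ γ')
    (h : marg2 N ℓ γ = marg2 N ℓ γ') (φ : Fin ℓ → Fin ℓ → ℝ) :
    ∑ x, γ x * ∑ k, ∑ k', φ (x k) (x k') = ∑ x, γ' x * ∑ k, ∑ k', φ (x k) (x k') := by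
  have hswap : ∀ δ : (Fin N → Fin ℓ) → ℝ,
      ∑ x, δ x * ∑ k, ∑ k', φ (x k) (x k') = ∑ k, ∑ k', ∑ x, δ x * φ (x k) (x k') := by
    intro δ
    simp only [Finset.mul_sum]
    rw [Finset.sum_comm]
    exact Finset.sum_congr rfl fun _ _ => Finset.sum_comm
  simp only [hswap, hγ.sum_mul_apply_apply hN, hγ'.sum_mul_apply_apply hN, h]

def pairKernel (lam : Fin ℓ → ℝ) (a b : Fin ℓ) : ℝ :=
  ∑ j, ((if a = j then 1 else 0) - lam j) * ((if b = j then 1 else 0) - lam j)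

noncomputable def sqDistMargOf (N ℓ : ℕ) (lam : Fin ℓ → ℝ) (x : Fin N → Fin ℓ) : ℝ :=
  ∑ j, (margOf N ℓ x j - lam j) ^ 2

theorem sum_sum_pairKernel [NeZero N] (lam : Fin ℓ → ℝ) (x : Fin N → Fin ℓ) :
    ∑ k, ∑ k', pairKernel lam (x k) (x k') = (N : ℝ) ^ 2 * sqDistMargOf N ℓ lam x := by
  have hdev : ∀ j, ∑ k, ((if x k = j then 1 else 0) - lam j) = N * (margOf N ℓ x j - lam j) := by
    intro j
    simp only [margOf, Finset.sum_sub_distrib, Finset.sum_boole, Finset.sum_const,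
      Finset.card_univ, Fintype.card_fin, nsmul_eq_mul, mul_sub,
      mul_div_cancel₀ _ (NeZero.ne (N : ℝ))]
  calc ∑ k, ∑ k', pairKernel lam (x k) (x k')
      = ∑ j, (∑ k, ((if x k = j then 1 else 0) - lam j)) ^ 2 := by
        simp only [pairKernel, sq, Finset.sum_mul_sum]
        symm
        rw [Finset.sum_comm]
        exact Finset.sum_congr rfl fun _ _ => Finset.sum_comm
    _ = (N : ℝ) ^ 2 * sqDistMargOf N ℓ lam x := by
        simp only [hdev, sqDistMargOf, mul_pow, Finset.mul_sum]

theorem IsSymmFun.sum_mul_sqDistMargOf_eq_of_marg2_eq [NeZero N] (hN : 2 ≤ N)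
    {γ γ' : (Fin N → Fin ℓ) → ℝ} (hγ : IsSymmFun N ℓ γ) (hγ' : IsSymmFun N ℓ γ')
    (h : marg2 N ℓ γ = marg2 N ℓ γ') (lam : Fin ℓ → ℝ) :
    ∑ x, γ x * sqDistMargOf N ℓ lam x = ∑ x, γ' x * sqDistMargOf N ℓ lam x := by
  have key := hγ.sum_mul_sum_sum_eq_of_marg2_eq hN hγ' h (pairKernel lam)
  simp only [sum_sum_pairKernel, mul_left_comm _ ((N : ℝ) ^ 2), ← Finset.mul_sum] at key
  exact mul_left_cancel₀ (pow_ne_zero 2 (NeZero.ne (N : ℝ))) key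

theorem sum_mul_sqDistMargOf_eq_zero {γ : (Fin N → Fin ℓ) → ℝ} {lam : Fin ℓ → ℝ}
    (hsupp : ∀ x, γ x ≠ 0 → margOf N ℓ x = lam) :
    ∑ x, γ x * sqDistMargOf N ℓ lam x = 0 := by
  refine Finset.sum_eq_zero fun x _ => ?_
  by_cases hx : γ x = 0
  · rw [hx, zero_mul]
  · simp [sqDistMargOf, hsupp x hx]

theorem margOf_eq_of_sum_mul_sqDistMargOf_eq_zero {γ : (Fin N → Fin ℓ) → ℝ} {lam : Fin ℓ → ℝ}
    (hγ : ∀ x, 0 ≤ γ x) (h : ∑ x, γ x * sqDistMargOf N ℓ lam x = 0) {x : Fin N → Fin ℓ}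
    (hx : γ x ≠ 0) : margOf N ℓ x = lam := by
  have hnonneg : ∀ y, 0 ≤ sqDistMargOf N ℓ lam y := fun y => by
    unfold sqDistMargOf; positivity
  have hterm := (Finset.sum_eq_zero_iff_of_nonneg fun y _ => mul_nonneg (hγ y) (hnonneg y)).mp h
    x (Finset.mem_univ x)
  have hdist : sqDistMargOf N ℓ lam x = 0 := (mul_eq_zero.mp hterm).resolve_left hx
  funext j
  have := (Finset.sum_eq_zero_iff_of_nonneg fun j _ => sq_nonneg (margOf N ℓ x j - lam j)).mp
    hdist j (Finset.mem_univ j)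
  simpa [sub_eq_zero] using this

theorem IsSymmFun.apply_eq_of_support [NeZero N] {γ : (Fin N → Fin ℓ) → ℝ} {lam : Fin ℓ → ℝ}
    (hγ : IsSymmFun N ℓ γ) (hsum : ∑ x, γ x = 1) (hsupp : ∀ x, γ x ≠ 0 → margOf N ℓ x = lam)
    (y : Fin N → Fin ℓ) :
    γ y = if margOf N ℓ y = lam then (#{x | margOf N ℓ x = lam} : ℝ)⁻¹ else 0 := by
  split_ifs with hy
  · rw [← Finset.sum_filter_of_ne fun x _ => hsupp x,
      Finset.sum_congr rfl fun x hx => hγ.apply_eq_of_margOf_eq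
        (((Finset.mem_filter.mp hx).2).trans hy.symm),
      Finset.sum_const, nsmul_eq_mul] at hsum
    exact eq_inv_of_mul_eq_one_right hsum
  · exact not_not.mp (mt (hsupp y) hy)

theorem gammaLam_eq_symmetrize {lam : Fin ℓ → ℝ} (hlam : ∃ x, margOf N ℓ x = lam) :
    gammaLam N ℓ lam = symmetrize N ℓ fun x => if x = hlam.choose then 1 else 0 :=
  dif_pos hlam

theorem isSymmFun_gammaLam {lam : Fin ℓ → ℝ} (hlam : ∃ x, margOf N ℓ x = lam) :
    IsSymmFun N ℓ (gammaLam N ℓ lam) := by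
  rw [gammaLam_eq_symmetrize hlam]
  exact isSymmFun_symmetrize _

theorem sum_gammaLam {lam : Fin ℓ → ℝ} (hlam : ∃ x, margOf N ℓ x = lam) :
    ∑ x, gammaLam N ℓ lam x = 1 := by
  simp [gammaLam_eq_symmetrize hlam, sum_symmetrize]

theorem margOf_eq_of_gammaLam_ne_zero {lam : Fin ℓ → ℝ} (hlam : ∃ x, margOf N ℓ x = lam)
    {x : Fin N → Fin ℓ} (hx : gammaLam N ℓ lam x ≠ 0) : margOf N ℓ x = lam := by
  rw [gammaLam_eq_symmetrize hlam] at hx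
  obtain ⟨σ, hσ⟩ := exists_perm_of_symmetrize_ne_zero hx
  rw [← margOf_comp_perm σ, (ite_ne_right_iff.mp hσ).1, hlam.choose_spec]

end

/-- γ_λ is the unique symmetric probability measure on X^N with
its two-point marginal: if γ ∈ P_sym(X^N) and M₂γ = M₂γ_λ then γ = γ_λ. -/
theorem gammaLam_unique_from_two_marginal (ℓ N : ℕ) [NeZero N] (hN : 2 ≤ N)
    (lam : Fin ℓ → ℝ) (hlam : lam ∈ QuantFinset N ℓ)
    (γ : (Fin N → Fin ℓ) → ℝ) (hγ : γ ∈ PSym N ℓ)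
    (h2 : marg2 N ℓ γ = marg2 N ℓ (gammaLam N ℓ lam)) :
    γ = gammaLam N ℓ lam := by
  obtain ⟨⟨hγ_nonneg, hγ_sum⟩, hγ_symm⟩ := hγ
  have hlam' : ∃ x, margOf N ℓ x = lam := by simpa [QuantFinset] using hlam
  have hγlam_supp : ∀ x, gammaLam N ℓ lam x ≠ 0 → margOf N ℓ x = lam :=
    fun _ => margOf_eq_of_gammaLam_ne_zero hlam'
  have hγ_supp : ∀ x, γ x ≠ 0 → margOf N ℓ x = lam := by
    refine fun x => margOf_eq_of_sum_mul_sqDistMargOf_eq_zero hγ_nonneg ?_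
    rw [hγ_symm.sum_mul_sqDistMargOf_eq_of_marg2_eq hN (isSymmFun_gammaLam hlam') h2]
    exact sum_mul_sqDistMargOf_eq_zero hγlam_supp
  funext y
  rw [hγ_symm.apply_eq_of_support hγ_sum hγ_supp,
    (isSymmFun_gammaLam hlam').apply_eq_of_support (sum_gammaLam hlam') hγlam_supp]
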